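/- Let M = {closedBall(cᵢ, rᵢ)}ᵢ₌₁ᵐ be a finite collection of closed balls in ℝᵈ with positive radii and not all centers equal, and let μ_M be its Čech scale (the infimum of λ ≥ 0 such that ⋂ᵢ closedBall(cᵢ, λrᵢ) ≠ ∅). Then the intersection at the Čech scale, ⋂ᵢ closedBall(cᵢ, μ_M·rᵢ), consists of exactly one point. -/

import Mathlib

/-!
The Čech scale is attained: the intersections at scales `λ > μ` are nested nonempty compact sets,
and their intersection is the intersection at scale `μ`. If two distinct points `p ≠ q` lay in it,
strict convexity of the norm would put their midpoint in the open balls of radii `μ rᵢ`; since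
there are finitely many balls, the midpoint would then lie in the closed balls of radii `λ rᵢ` for
some `λ < μ`, contradicting minimality.
-/

open Metric Filter Topology

section CechScale

variable {E ι : Type*}

def cechScales [PseudoMetricSpace E] (c : ι → E) (r : ι → ℝ) : Set ℝ :=
  {lam : ℝ | 0 ≤ lam ∧ (⋂ i, closedBall (c i) (lam * r i)).Nonempty}

section Metric

variable [PseudoMetricSpace E] {c : ι → E} {r : ι → ℝ}

theorem monotone_iInter_closedBall_mul (hr : ∀ i, 0 ≤ r i) :
    Monotone fun lam : ℝ ↦ ⋂ i, closedBall (c i) (lam * r i) :=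
  fun _ _ hab ↦ Set.iInter_mono fun i ↦ closedBall_subset_closedBall <|
    mul_le_mul_of_nonneg_right hab (hr i)

theorem bddBelow_cechScales : BddBelow (cechScales c r) :=
  ⟨0, fun _ h ↦ h.1⟩

theorem mem_cechScales_of_le (hr : ∀ i, 0 ≤ r i) {a b : ℝ} (ha : a ∈ cechScales c r)
    (hab : a ≤ b) : b ∈ cechScales c r :=
  ⟨ha.1.trans hab, ha.2.mono (monotone_iInter_closedBall_mul hr hab)⟩

theorem cechScales_nonempty [Finite ι] [Nonempty E] (hr : ∀ i, 0 < r i) :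
    (cechScales c r).Nonempty := by
  obtain ⟨x⟩ := ‹Nonempty E›
  have : ∀ᶠ lam in atTop, 0 ≤ lam ∧ ∀ i, dist x (c i) ≤ lam * r i :=
    (eventually_ge_atTop 0).and <| eventually_all.2 fun i ↦
      (eventually_ge_atTop (dist x (c i) / r i)).mono fun _ h ↦ (div_le_iff₀ (hr i)).1 h
  obtain ⟨lam, hlam0, hx⟩ := this.exists
  exact ⟨lam, hlam0, x, Set.mem_iInter.2 hx⟩

theorem mem_cechScales_of_sInf_lt [Finite ι] [Nonempty E] (hr : ∀ i, 0 < r i) {lam : ℝ}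
    (h : sInf (cechScales c r) < lam) : lam ∈ cechScales c r := by
  obtain ⟨a, ha, hlt⟩ := exists_lt_of_csInf_lt (cechScales_nonempty hr) h
  exact mem_cechScales_of_le (fun i ↦ (hr i).le) ha hlt.le

theorem iInter_gt_iInter_closedBall_mul_subset (μ : ℝ) :
    ⋂ lam : Set.Ioi μ, ⋂ i, closedBall (c i) (lam * r i) ⊆ ⋂ i, closedBall (c i) (μ * r i) := by
  intro x hx
  simp only [Set.mem_iInter, mem_closedBall, Subtype.forall, Set.mem_Ioi] at hx ⊢
  exact fun i ↦ ge_of_tendsto ((tendsto_id.mul_const (r i)).mono_left nhdsWithin_le_nhds)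
    (eventually_nhdsWithin_of_forall (s := Set.Ioi μ) fun lam hlam ↦ hx lam hlam i)

theorem sInf_cechScales_lt [Finite ι] [Nonempty ι] (hr : ∀ i, 0 < r i) {x : E} {μ : ℝ}
    (hx : ∀ i, dist x (c i) < μ * r i) : sInf (cechScales c r) < μ := by
  have hnear : ∀ᶠ lam in 𝓝 μ, ∀ i, dist x (c i) < lam * r i := eventually_all.2 fun i ↦
    (tendsto_id.mul_const (r i)).eventually_const_lt (hx i)
  have hμ : 0 < μ := by
    obtain ⟨i⟩ := ‹Nonempty ι›
    exact pos_of_mul_pos_left (dist_nonneg.trans_lt (hx i)) (hr i).le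
  obtain ⟨lam, hlt, hpos, hlam⟩ :=
    ((eventually_nhdsWithin_of_forall fun _ h ↦ h).and <|
      (eventually_gt_nhds hμ).filter_mono nhdsWithin_le_nhds |>.and <|
      hnear.filter_mono nhdsWithin_le_nhds).exists (f := 𝓝[<] μ)
  have hmem : lam ∈ cechScales c r :=
    ⟨hpos.le, x, Set.mem_iInter.2 fun i ↦ mem_closedBall.2 (hlam i).le⟩
  exact (csInf_le bddBelow_cechScales hmem).trans_lt hlt

end Metric

theorem nonempty_iInter_closedBall_sInf_cechScales [PseudoMetricSpace E] [ProperSpace E]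
    [Finite ι] [Nonempty ι] {c : ι → E} {r : ι → ℝ} (hr : ∀ i, 0 < r i) :
    (⋂ i, closedBall (c i) (sInf (cechScales c r) * r i)).Nonempty := by
  have : Nonempty E := .map c inferInstance
  obtain ⟨i₀⟩ := ‹Nonempty ι›
  set K := fun lam : ℝ ↦ ⋂ i, closedBall (c i) (lam * r i)
  have hKc : ∀ lam, IsClosed (K lam) := fun _ ↦ isClosed_iInter fun _ ↦ isClosed_closedBall
  refine .mono (iInter_gt_iInter_closedBall_mul_subset _) <|
    IsCompact.nonempty_iInter_of_directed_nonempty_isCompact_isClosed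
      (fun lam : Set.Ioi (sInf (cechScales c r)) ↦ K lam) ?_ ?_ ?_ ?_
  · exact ((monotone_iInter_closedBall_mul fun i ↦ (hr i).le).comp
      (Subtype.mono_coe _)).directed_ge
  · exact fun lam ↦ (mem_cechScales_of_sInf_lt hr lam.2).2
  · exact fun lam ↦ (isCompact_closedBall (c i₀) (lam * r i₀)).of_isClosed_subset (hKc lam)
      (Set.iInter_subset _ i₀)
  · exact fun lam ↦ hKc lam

theorem subsingleton_iInter_closedBall_sInf_cechScales [NormedAddCommGroup E] [NormedSpace ℝ E]
    [StrictConvexSpace ℝ E] [Finite ι] [Nonempty ι] {c : ι → E} {r : ι → ℝ}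
    (hr : ∀ i, 0 < r i) :
    (⋂ i, closedBall (c i) (sInf (cechScales c r) * r i)).Subsingleton := by
  intro p hp q hq
  by_contra hpq
  have hmid : ∀ i, dist ((1 / 2 : ℝ) • p + (1 / 2 : ℝ) • q) (c i)
      < sInf (cechScales c r) * r i := fun i ↦
    mem_ball.1 <| combo_mem_ball_of_ne (Set.mem_iInter.1 hp i) (Set.mem_iInter.1 hq i) hpq
      one_half_pos one_half_pos (add_halves 1)
  exact (sInf_cechScales_lt hr hmid).false

end CechScale

/-- At the Čech scale, the intersection of the rescaled balls is a single point. -/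
theorem stmt_12 {d m : ℕ} (c : Fin m → EuclideanSpace ℝ (Fin d)) (r : Fin m → ℝ)
    (hr : ∀ i, 0 < r i) (hc : ∃ i j, c i ≠ c j)
    (μ : ℝ) (hμ : μ = sInf {lam : ℝ | 0 ≤ lam ∧
      (⋂ i, closedBall (c i) (lam * r i)).Nonempty}) :
    ∃ p, (⋂ i, closedBall (c i) (μ * r i)) = {p} := by
  obtain ⟨i, -⟩ := hc
  have : Nonempty (Fin m) := ⟨i⟩
  change μ = sInf (cechScales c r) at hμ
  subst hμ
  obtain ⟨p, hp⟩ := nonempty_iInter_closedBall_sInf_cechScales (c := c) hr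
  exact ⟨p, (subsingleton_iInter_closedBall_sInf_cechScales hr).eq_singleton_of_mem hp⟩
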